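/- Intersecting at a path preserves accepted subterms: if t ∈ ⟦n|p⟧ and t ∈ ⟦n'⟧, then t ∈ ⟦(n ⊓ₚ n')|p⟧, where n ⊓ₚ n' denotes intersecting node n with n' at path p. -/

import Mathlib

universe u
variable {S : Type u}

/-- Terms over a signature: a symbol applied to a list of child terms. -/
inductive Term (S : Type u) where
  | mk : S → List (Term S) → Term S

/-- The i-th child of a term, if it exists. -/
def Term.child : Term S → ℕ → Option (Term S)
  | .mk _ ts, i => ts[i]?

/-- Subterm of `t` at path `p` (partial). -/
def subAt : List ℕ → Term S → Option (Term S)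
  | [], t => some t
  | i :: p, t => (t.child i).bind (subAt p)

/-- A term satisfies a path equivalence class `c` if the subterms at
all paths of `c` exist and are equal. -/
def pecSat (c : Set (List ℕ)) (t : Term S) : Prop :=
  ∃ t', ∀ p ∈ c, subAt p t = some t'

/-- A term satisfies a path constraint set if it satisfies each member PEC. -/
def pcsSat (C : Set (Set (List ℕ))) (t : Term S) : Prop :=
  ∀ c ∈ C, pecSat c t

/-- A PCS is closed if whenever `p', p'' ∈ c₁ ∈ C` and `p'.p ∈ c₂ ∈ C`,
then also `p''.p ∈ c₂`. -/
def Closed (C : Set (Set (List ℕ))) : Prop :=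
  ∀ c₁ ∈ C, ∀ c₂ ∈ C, ∀ p' p'' p : List ℕ,
    p' ∈ c₁ → p'' ∈ c₁ → p' ++ p ∈ c₂ → p'' ++ p ∈ c₂

/-- A set of paths is prefix-free if no member is a proper prefix of another. -/
def PrefixFree (c : Set (List ℕ)) : Prop :=
  ∀ p ∈ c, ∀ q ∈ c, p <+: q → p = q

/-- Well-formed terms with respect to an arity function. -/
inductive WFT (ar : S → ℕ) : Term S → Prop where
  | mk {s : S} {ts : List (Term S)} :
      ts.length = ar s → (∀ t ∈ ts, WFT ar t) → WFT ar (Term.mk s ts)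

mutual
/-- An acyclic ECTA node (state): a finite list of transitions. -/
inductive Node (S : Type u) where
  | mk : List (Edge S) → Node S
/-- An ECTA transition: a symbol, child nodes, and a path constraint set,
or the empty transition `⊥`. -/
inductive Edge (S : Type u) where
  | mk : S → List (Node S) → Set (Set (List ℕ)) → Edge S
  | bot : Edge S
end

mutual
/-- Acceptance of a term by a node. -/
inductive AccN : Node S → Term S → Prop where
  | intro {es : List (Edge S)} {e : Edge S} {t : Term S} :
      e ∈ es → AccE e t → AccN (Node.mk es) t
/-- Acceptance of a term by a transition: the symbols match, each child term
is accepted by the corresponding child node, and the term satisfies the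
constraint set. -/
inductive AccE : Edge S → Term S → Prop where
  | intro {s : S} {ns : List (Node S)} {C : Set (Set (List ℕ))} {ts : List (Term S)} :
      ts.length = ns.length →
      (∀ i (h1 : i < ns.length) (h2 : i < ts.length), AccN (ns[i]'h1) (ts[i]'h2)) →
      pcsSat C (Term.mk s ts) →
      AccE (Edge.mk s ns C) (Term.mk s ts)
end

/-- Denotation of a node. -/
def denN (n : Node S) : Set (Term S) := {t | AccN n t}
/-- Denotation of a transition. -/
def denE (e : Edge S) : Set (Term S) := {t | AccE e t}

/-- Union of two nodes: merge their transitions. -/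
def Node.union : Node S → Node S → Node S
  | .mk es₁, .mk es₂ => .mk (es₁ ++ es₂)

/-- The empty node `⊥`. -/
def botN : Node S := Node.mk []

/-- Consistency of a PCS: some term satisfies it. -/
def Consistent (S : Type u) (C : Set (Set (List ℕ))) : Prop :=
  ∃ t : Term S, pcsSat C t

open Classical in
mutual
/-- Intersection of two nodes: pairwise intersection of their transitions. -/
noncomputable def interN : Node S → Node S → Node S
  | .mk es₁, .mk es₂ => .mk (interEdges es₁ es₂)
  termination_by n₁ n₂ => sizeOf n₁ + sizeOf n₂
noncomputable def interEdges : List (Edge S) → List (Edge S) → List (Edge S)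
  | [], _ => []
  | e :: es, es₂ => interEdgeList e es₂ ++ interEdges es es₂
  termination_by es₁ es₂ => sizeOf es₁ + sizeOf es₂
noncomputable def interEdgeList : Edge S → List (Edge S) → List (Edge S)
  | _, [] => []
  | e₁, e₂ :: es => interE e₁ e₂ :: interEdgeList e₁ es
  termination_by e es => sizeOf e + sizeOf es
/-- Intersection of two transitions: same symbol, pointwise child
intersection, union of constraint sets when consistent; `⊥` otherwise. -/
noncomputable def interE : Edge S → Edge S → Edge S
  | .bot, _ => .bot
  | .mk _ _ _, .bot => .bot
  | .mk s₁ ns₁ C₁, .mk s₂ ns₂ C₂ =>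
    if s₁ = s₂ ∧ ns₁.length = ns₂.length ∧ Consistent S (C₁ ∪ C₂)
    then .mk s₁ (interNodes ns₁ ns₂) (C₁ ∪ C₂)
    else .bot
  termination_by e₁ e₂ => sizeOf e₁ + sizeOf e₂
noncomputable def interNodes : List (Node S) → List (Node S) → List (Node S)
  | [], _ => []
  | _ :: _, [] => []
  | n₁ :: ns₁, n₂ :: ns₂ => interN n₁ n₂ :: interNodes ns₁ ns₂
  termination_by ns₁ ns₂ => sizeOf ns₁ + sizeOf ns₂
  decreasing_by all_goals (simp; omega)
end

mutual
/-- Nodes reachable from a node via a path. -/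
def nodesN : Node S → List ℕ → List (Node S)
  | n, [] => [n]
  | .mk es, j :: p => nodesL es (j :: p)
def nodesL : List (Edge S) → List ℕ → List (Node S)
  | [], _ => []
  | e :: es, p => nodesE e p ++ nodesL es p
/-- Nodes reachable from a transition via a (nonempty) path. -/
def nodesE : Edge S → List ℕ → List (Node S)
  | _, [] => []
  | .bot, _ => []
  | .mk _ ns _, j :: p => nodesNs ns j p
def nodesNs : List (Node S) → ℕ → List ℕ → List (Node S)
  | [], _, _ => []
  | n :: _, 0, p => nodesN n p
  | _ :: ns, j + 1, p => nodesNs ns j p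
end

/-- Union of a list of nodes. -/
def unionList (l : List (Node S)) : Node S := l.foldr Node.union botN

/-- Subautomaton of a node at a path: union of all reachable nodes. -/
def subN (n : Node S) (p : List ℕ) : Node S := unionList (nodesN n p)

/-- Subautomaton of a transition at a path. -/
def subE (e : Edge S) (p : List ℕ) : Node S := unionList (nodesE e p)

mutual
/-- Intersect a node with `n'` at path `p`: replace every node reachable
via `p` by its intersection with `n'`. -/
noncomputable def iapN : Node S → List ℕ → Node S → Node S
  | n, [], n' => interN n n'
  | .mk es, j :: p, n' => .mk (iapL es (j :: p) n')
noncomputable def iapL : List (Edge S) → List ℕ → Node S → List (Edge S)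
  | [], _, _ => []
  | e :: es, p, n' => iapE e p n' :: iapL es p n'
/-- Intersect a transition with `n'` at a path. -/
noncomputable def iapE : Edge S → List ℕ → Node S → Edge S
  | .bot, _, _ => .bot
  | e, [], _ => e
  | .mk s ns C, j :: p, n' =>
    if j < ns.length then .mk s (iapNs ns j p n') C else .bot
noncomputable def iapNs : List (Node S) → ℕ → List ℕ → Node S → List (Node S)
  | [], _, _, _ => []
  | n :: ns, 0, p, n' => iapN n p n' :: ns
  | n :: ns, j + 1, p, n' => n :: iapNs ns j p n'
end

section Aux
variable {S : Type u}

theorem accN_mk {es : List (Edge S)} {t : Term S} :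
    AccN (Node.mk es) t ↔ ∃ e ∈ es, AccE e t := by
  constructor
  · intro h; cases h with | intro he ha => exact ⟨_, he, ha⟩
  · rintro ⟨e, he, ha⟩; exact AccN.intro he ha

theorem accN_union {a b : Node S} {t : Term S} :
    AccN (Node.union a b) t ↔ AccN a t ∨ AccN b t := by
  obtain ⟨es₁⟩ := a; obtain ⟨es₂⟩ := b
  simp only [Node.union, accN_mk, List.mem_append]
  constructor
  · rintro ⟨e, (h | h), ha⟩
    · exact Or.inl ⟨e, h, ha⟩
    · exact Or.inr ⟨e, h, ha⟩
  · rintro (⟨e, h, ha⟩ | ⟨e, h, ha⟩)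
    · exact ⟨e, Or.inl h, ha⟩
    · exact ⟨e, Or.inr h, ha⟩

theorem accN_unionList {l : List (Node S)} {t : Term S} :
    AccN (unionList l) t ↔ ∃ m ∈ l, AccN m t := by
  induction l with
  | nil =>
    simp only [unionList, List.foldr_nil, botN, accN_mk]
    simp
  | cons a l ih =>
    rw [show unionList (a :: l) = Node.union a (unionList l) from rfl, accN_union, ih]
    simp

theorem mem_interEdgeList {e₁ e₂ : Edge S} {es₂ : List (Edge S)} (h : e₂ ∈ es₂) :
    interE e₁ e₂ ∈ interEdgeList e₁ es₂ := by
  induction es₂ with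
  | nil => cases h
  | cons a es ih =>
    rw [interEdgeList]
    rcases List.mem_cons.1 h with rfl | h
    · exact List.mem_cons_self
    · exact List.mem_cons_of_mem _ (ih h)

theorem mem_interEdges {e₁ e₂ : Edge S} {es₁ es₂ : List (Edge S)}
    (h₁ : e₁ ∈ es₁) (h₂ : e₂ ∈ es₂) : interE e₁ e₂ ∈ interEdges es₁ es₂ := by
  induction es₁ with
  | nil => cases h₁
  | cons a es ih =>
    rw [interEdges]
    rcases List.mem_cons.1 h₁ with rfl | h₁
    · exact List.mem_append_left _ (mem_interEdgeList h₂)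
    · exact List.mem_append_right _ (ih h₁)

theorem interNodes_eq (ns₁ ns₂ : List (Node S)) :
    interNodes ns₁ ns₂ = List.zipWith interN ns₁ ns₂ := by
  induction ns₁ generalizing ns₂ with
  | nil => rw [interNodes]; simp
  | cons a ns ih =>
    cases ns₂ with
    | nil => rw [interNodes]; simp
    | cons b ns₂ => rw [interNodes, ih]; simp

theorem inter_acc : ∀ (t : Term S) (n₁ n₂ : Node S), AccN n₁ t → AccN n₂ t → AccN (interN n₁ n₂) t
  | t, .mk es₁, .mk es₂, h₁, h₂ => by
    rw [accN_mk] at h₁ h₂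
    obtain ⟨e₁, he₁, ha₁⟩ := h₁
    obtain ⟨e₂, he₂, ha₂⟩ := h₂
    cases ha₁ with
    | @intro s ns₁ C₁ ts hlen₁ hch₁ hC₁ =>
    cases ha₂ with
    | @intro _ ns₂ C₂ _ hlen₂ hch₂ hC₂ =>
    have hsat : pcsSat (C₁ ∪ C₂) (Term.mk s ts) := by
      intro c hc
      rcases hc with hc | hc
      · exact hC₁ c hc
      · exact hC₂ c hc
    have hcond : s = s ∧ ns₁.length = ns₂.length ∧ Consistent S (C₁ ∪ C₂) :=
      ⟨rfl, by omega, ⟨_, hsat⟩⟩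
    have hE : AccE (interE (Edge.mk s ns₁ C₁) (Edge.mk s ns₂ C₂)) (Term.mk s ts) := by
      rw [interE, if_pos hcond]
      refine AccE.intro ?_ ?_ hsat
      · rw [interNodes_eq, List.length_zipWith]; omega
      · intro i hi1 hi2
        have hi1' : i < ns₁.length := by
          rw [interNodes_eq, List.length_zipWith] at hi1; omega
        have hi2' : i < ns₂.length := by omega
        simp only [interNodes_eq, List.getElem_zipWith]
        exact inter_acc ts[i] _ _ (hch₁ i hi1' hi2) (hch₂ i hi2' hi2)
    rw [interN]
    exact AccN.intro (mem_interEdges he₁ he₂) hE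
  termination_by t => sizeOf t
  decreasing_by
    have := List.sizeOf_lt_of_mem (ts.getElem_mem hi2)
    subst_vars
    simp only [Term.mk.sizeOf_spec]
    omega

theorem nodesNs_nil {ns : List (Node S)} {j : ℕ} {p : List ℕ} (h : ns.length ≤ j) :
    nodesNs ns j p = [] := by
  induction ns generalizing j with
  | nil => rw [nodesNs]
  | cons a ns ih =>
    cases j with
    | zero => simp at h
    | succ j => rw [nodesNs]; exact ih (by simpa using h)

mutual
theorem nodes_iapN (n : Node S) (p : List ℕ) (n' : Node S) :
    nodesN (iapN n p n') p = (nodesN n p).map (fun m => interN m n') := by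
  match n, p with
  | n, [] => rw [iapN, nodesN, nodesN]; simp
  | .mk es, j :: p =>
    rw [iapN, nodesN, nodesN]
    exact nodes_iapL es (j :: p) n'
termination_by sizeOf n

theorem nodes_iapL (es : List (Edge S)) (p : List ℕ) (n' : Node S) :
    nodesL (iapL es p n') p = (nodesL es p).map (fun m => interN m n') := by
  match es with
  | [] => rw [iapL, nodesL]; rfl
  | e :: es =>
    have H1 := nodes_iapE e p n'
    have H2 := nodes_iapL es p n'
    rw [iapL, nodesL, H1, H2, nodesL]
    simp
termination_by sizeOf es

theorem nodes_iapE (e : Edge S) (p : List ℕ) (n' : Node S) :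
    nodesE (iapE e p n') p = (nodesE e p).map (fun m => interN m n') := by
  match e, p with
  | .bot, [] => rw [iapE]; rw [nodesE]; rfl
  | .bot, j :: p => rw [iapE]; rw [nodesE.eq_def]; rfl
  | .mk s ns C, [] => rw [iapE.eq_def, nodesE]; rfl
  | .mk s ns C, j :: p =>
    rw [iapE]
    by_cases h : j < ns.length
    · have H := nodes_iapNs ns j p n'
      rw [if_pos h, nodesE, nodesE, H]
    · rw [if_neg h, nodesE.eq_def, nodesE, nodesNs_nil (le_of_not_gt h)]
      rfl
termination_by sizeOf e

theorem nodes_iapNs (ns : List (Node S)) (j : ℕ) (p : List ℕ) (n' : Node S) :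
    nodesNs (iapNs ns j p n') j p = (nodesNs ns j p).map (fun m => interN m n') := by
  match ns, j with
  | [], _ => rw [iapNs, nodesNs]; rfl
  | n :: ns, 0 =>
    have H := nodes_iapN n p n'
    rw [iapNs, nodesNs, nodesNs, H]
  | n :: ns, j + 1 =>
    have H := nodes_iapNs ns j p n'
    rw [iapNs, nodesNs, nodesNs, H]
termination_by sizeOf ns
end

end Aux

/-- Intersecting at a path preserves accepted subterms: if `t ∈ ⟦n|p⟧` and
`t ∈ ⟦n'⟧` then `t ∈ ⟦(n ⊓ₚ n')|p⟧`. -/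
theorem iap_preserves (n n' : Node S) (p : List ℕ) (t : Term S) :
    t ∈ denN (subN n p) → t ∈ denN n' → t ∈ denN (subN (iapN n p n') p) := by
  intro h₁ h₂
  simp only [denN, Set.mem_setOf_eq, subN] at *
  rw [accN_unionList] at h₁ ⊢
  obtain ⟨m, hm, ha⟩ := h₁
  refine ⟨interN m n', ?_, inter_acc t m n' ha h₂⟩
  rw [nodes_iapN]
  exact List.mem_map_of_mem hm
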